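/- arXiv:1901.06375 — 2 statements merged into one kernel-verified Lean document; each statement's English description precedes it below -/
import Mathlib

section
/- Let s > 1 be an integer. For each finite set Q ⊆ ℤ there exists a nonzero integer M such that for every w ∈ Q and every nonzero integer j, the number s/(w + sMj) is a 2-step relation number. -/
/-- `a = [[1,0],[1,1]]` as an element of `SL(2, ℂ)`. -/
def matA : Matrix.SpecialLinearGroup (Fin 2) ℂ :=
  ⟨!![1, 0; 1, 1], by simp [Matrix.det_fin_two_of]⟩

/-- `b_q = [[1,q],[0,1]]` as an element of `SL(2, ℂ)`. -/
def matB (q : ℂ) : Matrix.SpecialLinearGroup (Fin 2) ℂ :=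
  ⟨!![1, q; 0, 1], by simp [Matrix.det_fin_two_of]⟩

/-- `q` is a relation number: the homomorphism `F₂ → SL(2,ℂ)`, `x ↦ a`, `y ↦ b_q`,
is not injective. -/
def IsRelationNumber (q : ℂ) : Prop :=
  ¬ Function.Injective
    (FreeGroup.lift (fun i : Bool => if i then matA else matB q) :
      FreeGroup Bool →* Matrix.SpecialLinearGroup (Fin 2) ℂ)

/-- `q` is an `ℓ`-step relation number: there are `k ≤ ℓ` and nonzero integers
`m_1, …, m_{2k+1}` with `b_q^{m_1} a^{m_2} ⋯ b_q^{m_{2k+1}}` lower triangular. -/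
def IsStepRelationNumber (ℓ : ℕ) (q : ℂ) : Prop :=
  ∃ k : ℕ, k ≤ ℓ ∧ ∃ m : Fin (2 * k + 1) → ℤ, (∀ i, m i ≠ 0) ∧
    ((List.ofFn (fun i : Fin (2 * k + 1) =>
      (if (i : ℕ) % 2 = 0 then matB q else matA) ^ (m i))).prod).val 0 1 = 0

/-- The residue class `w + smℤ` is `s`-good with good representative `w`. -/
def IsGoodRep (s w m : ℤ) : Prop :=
  ∃ y : ℤ, y * (Int.gcd w (s * m) : ℤ) ∣ m * (Int.gcd w s : ℤ) ∧
    (w ∣ s * m * y + (Int.gcd w (s * m) : ℤ) ∨ w ∣ s * m * y - (Int.gcd w (s * m) : ℤ))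

section Aux

/-- `[[1,0],[x,1]]` as an element of `SL(2,ℂ)`. -/
def matA' (x : ℂ) : Matrix.SpecialLinearGroup (Fin 2) ℂ :=
  ⟨!![1, 0; x, 1], by simp [Matrix.det_fin_two_of]⟩

lemma matB_mul (x y : ℂ) : matB x * matB y = matB (x + y) := by
  ext i j
  rw [Matrix.SpecialLinearGroup.coe_mul]
  fin_cases i <;> fin_cases j <;> simp [matB, Matrix.mul_fin_two] <;> ring_nf

lemma matA'_mul (x y : ℂ) : matA' x * matA' y = matA' (x + y) := by
  ext i j
  rw [Matrix.SpecialLinearGroup.coe_mul]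
  fin_cases i <;> fin_cases j <;> simp [matA', Matrix.mul_fin_two] <;> ring_nf

lemma matB_zero : matB 0 = 1 := by
  ext i j
  fin_cases i <;> fin_cases j <;> simp [matB]

lemma matA'_zero : matA' 0 = 1 := by
  ext i j
  fin_cases i <;> fin_cases j <;> simp [matA']

lemma matB_inv (x : ℂ) : (matB x)⁻¹ = matB (-x) := by
  apply inv_eq_of_mul_eq_one_right
  rw [matB_mul]; simp [matB_zero]

lemma matA'_inv (x : ℂ) : (matA' x)⁻¹ = matA' (-x) := by
  apply inv_eq_of_mul_eq_one_right
  rw [matA'_mul]; simp [matA'_zero]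

lemma matB_zpow (x : ℂ) (m : ℤ) : matB x ^ m = matB (m * x) := by
  induction m using Int.induction_on with
  | zero => simp [matB_zero]
  | succ k ih => rw [zpow_add_one, ih, matB_mul]; push_cast; ring_nf
  | pred k ih => rw [zpow_sub_one, ih, matB_inv, matB_mul]; push_cast; ring_nf

lemma matA_zpow (m : ℤ) : matA ^ m = matA' m := by
  show matA' 1 ^ m = matA' m
  induction m using Int.induction_on with
  | zero => simp [matA'_zero]
  | succ k ih => rw [zpow_add_one, ih, matA'_mul]; push_cast; ring_nf
  | pred k ih => rw [zpow_sub_one, ih, matA'_inv, matA'_mul]; push_cast; ring_nf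

lemma list1_prod (q : ℂ) (m : Fin (2 * 0 + 1) → ℤ) :
    ((List.ofFn (fun i : Fin (2 * 0 + 1) =>
      (if (i : ℕ) % 2 = 0 then matB q else matA) ^ (m i))).prod)
    = matB (m 0 * q) := by
  simp [List.ofFn_succ, matB_zpow]

lemma list3_prod (q : ℂ) (m : Fin (2 * 1 + 1) → ℤ) :
    ((List.ofFn (fun i : Fin (2 * 1 + 1) =>
      (if (i : ℕ) % 2 = 0 then matB q else matA) ^ (m i))).prod)
    = matB (m 0 * q) * matA' (m 1) * matB (m 2 * q) := by
  simp [List.ofFn_succ, matB_zpow, matA_zpow, mul_assoc]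

lemma list5_prod (q : ℂ) (m : Fin (2 * 2 + 1) → ℤ) :
    ((List.ofFn (fun i : Fin (2 * 2 + 1) =>
      (if (i : ℕ) % 2 = 0 then matB q else matA) ^ (m i))).prod)
    = matB (m 0 * q) * matA' (m 1) * matB (m 2 * q) * matA' (m 3) * matB (m 4 * q) := by
  have h3 : m (Fin.succ 2) = m 3 := rfl
  have h4 : m (Fin.succ 2).succ = m 4 := rfl
  simp [List.ofFn_succ, matB_zpow, matA_zpow, mul_assoc, h3, h4]

lemma entry3 (x1 y2 x3 : ℂ) :
    (matB x1 * matA' y2 * matB x3).val 0 1 = x1 + x3 + x1 * y2 * x3 := by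
  simp only [Matrix.SpecialLinearGroup.coe_mul]
  simp [matB, matA', Matrix.SpecialLinearGroup.coe_mul, Matrix.mul_fin_two]
  ring

lemma entry5 (x1 y2 x3 y4 x5 : ℂ) :
    (matB x1 * matA' y2 * matB x3 * matA' y4 * matB x5).val 0 1
    = x1 + x3 + x5 + x1*y2*(x3+x5) + y4*x5*(x1+x3) + x1*y2*x3*y4*x5 := by
  simp only [Matrix.SpecialLinearGroup.coe_mul]
  simp [matB, matA', Matrix.SpecialLinearGroup.coe_mul, Matrix.mul_fin_two]
  ring

end Aux

theorem stmt5 (s : ℤ) (hs : 1 < s) (Q : Finset ℤ) :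
    ∃ M : ℤ, M ≠ 0 ∧ ∀ w ∈ Q, ∀ j : ℤ, j ≠ 0 →
      IsStepRelationNumber 2 ((s : ℂ) / (((w + s * M * j : ℤ) : ℂ))) := by
  have hs0 : s ≠ 0 := by omega
  have hsC : (s : ℂ) ≠ 0 := Int.cast_ne_zero.mpr hs0
  have hfac : ∀ v : ℤ, 1 - s * v ≠ 0 := by
    intro v h
    have h1 : s * v = 1 := by omega
    rcases Int.isUnit_iff.mp (IsUnit.of_mul_eq_one (a := s) v h1) with h2 | h2 <;> omega
  refine ⟨∏ v ∈ Q, (1 - s * v), Finset.prod_ne_zero_iff.mpr fun v _ => hfac v, ?_⟩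
  set M : ℤ := ∏ v ∈ Q, (1 - s * v) with hMdef
  have hM : M ≠ 0 := Finset.prod_ne_zero_iff.mpr fun v _ => hfac v
  intro w hw j hj
  obtain ⟨t, ht⟩ : (1 - s * w) ∣ M := Finset.dvd_prod_of_mem _ hw
  have ht0 : t ≠ 0 := by rintro rfl; simp at ht; exact hM ht
  set d : ℤ := w + s * M * j with hd
  by_cases hd0 : d = 0
  · -- q = s / 0 = 0
    refine ⟨0, by norm_num, ![1], ?_, ?_⟩
    · intro i; fin_cases i; norm_num
    · rw [list1_prod]
      have : ((d : ℤ) : ℂ) = 0 := by rw [hd0]; norm_num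
      simp [this, matB]
  · have hdC0 : ((d : ℤ) : ℂ) ≠ 0 := Int.cast_ne_zero.mpr hd0
    by_cases hw0 : w = 0
    · -- k = 1 : m = ![1, -2*M*j, 1]
      subst hw0
      refine ⟨1, by norm_num, ![1, -2 * M * j, 1], ?_, ?_⟩
      · intro i; fin_cases i <;> simp [hM, hj]
      · rw [list3_prod]
        have e0 : (![1, -2 * M * j, 1] : Fin 3 → ℤ) 0 = 1 := rfl
        have e1 : (![1, -2 * M * j, 1] : Fin 3 → ℤ) 1 = -2 * M * j := rfl
        have e2 : (![1, -2 * M * j, 1] : Fin 3 → ℤ) 2 = 1 := rfl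
        rw [e0, e1, e2, entry3]
        have hdval : ((d : ℤ) : ℂ) = (s : ℂ) * M * j := by
          rw [hd]; push_cast; ring
        rw [hdval]
        have hMC : (M : ℂ) ≠ 0 := Int.cast_ne_zero.mpr hM
        have hjC : (j : ℂ) ≠ 0 := Int.cast_ne_zero.mpr hj
        push_cast
        field_simp
        ring
    · -- k = 2 : m = ![-w, d, e, -w, d] with e = -(s*t*j)
      set e : ℤ := -(s * t * j) with he
      have he0 : e ≠ 0 := by
        simp only [he, neg_ne_zero]
        exact mul_ne_zero (mul_ne_zero hs0 ht0) hj
      refine ⟨2, le_refl 2, ![-w, d, e, -w, d], ?_, ?_⟩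
      · intro i
        fin_cases i <;> simp [hw0, hd0, he0]
      · rw [list5_prod]
        have e0 : (![-w, d, e, -w, d] : Fin 5 → ℤ) 0 = -w := rfl
        have e1 : (![-w, d, e, -w, d] : Fin 5 → ℤ) 1 = d := rfl
        have e2 : (![-w, d, e, -w, d] : Fin 5 → ℤ) 2 = e := rfl
        have e3 : (![-w, d, e, -w, d] : Fin 5 → ℤ) 3 = -w := rfl
        have e4 : (![-w, d, e, -w, d] : Fin 5 → ℤ) 4 = d := rfl
        rw [e0, e1, e2, e3, e4, entry5]
        -- key identity : d = w - e * (1 - s * w)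
        have hkey : d = w - e * (1 - s * w) := by
          rw [hd, he, ht]; ring
        have hkeyC : ((d : ℤ) : ℂ) = (w : ℂ) - (e : ℂ) * (1 - (s : ℂ) * (w : ℂ)) := by
          rw [hkey]; push_cast; ring
        rw [hkeyC] at hdC0 ⊢
        push_cast
        field_simp
        ring
  done
end

section
/- A complex number q is a relation number if and only if q is an ℓ-step relation number for some integer ℓ ≥ 0. -/
abbrev SL2 := Matrix.SpecialLinearGroup (Fin 2) ℂ

def uL (s : ℂ) : SL2 := ⟨!![1, 0; s, 1], by simp [Matrix.det_fin_two_of]⟩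
def uR (s : ℂ) : SL2 := ⟨!![1, s; 0, 1], by simp [Matrix.det_fin_two_of]⟩

lemma uL_mul (s t : ℂ) : uL s * uL t = uL (s + t) := by
  apply Subtype.ext
  show (!![1,0;s,1] : Matrix (Fin 2) (Fin 2) ℂ) * !![1,0;t,1] = _
  rw [Matrix.mul_fin_two]; norm_num [uL, add_comm]

lemma uR_mul (s t : ℂ) : uR s * uR t = uR (s + t) := by
  apply Subtype.ext
  show (!![1,s;0,1] : Matrix (Fin 2) (Fin 2) ℂ) * !![1,t;0,1] = _
  rw [Matrix.mul_fin_two]; norm_num [uR, add_comm]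

lemma uL_zero : uL 0 = 1 := by
  apply Subtype.ext
  show (!![1,0;(0:ℂ),1]) = _
  simp [Matrix.SpecialLinearGroup.coe_one, ← Matrix.one_fin_two]

lemma uR_zero : uR 0 = 1 := by
  apply Subtype.ext
  show (!![1,(0:ℂ);0,1]) = _
  simp [Matrix.SpecialLinearGroup.coe_one, ← Matrix.one_fin_two]

lemma uL_inv (s : ℂ) : (uL s)⁻¹ = uL (-s) := by
  rw [eq_comm, eq_inv_iff_mul_eq_one, uL_mul]; simp [uL_zero]

lemma uR_inv (s : ℂ) : (uR s)⁻¹ = uR (-s) := by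
  rw [eq_comm, eq_inv_iff_mul_eq_one, uR_mul]; simp [uR_zero]

lemma uL_zpow (s : ℂ) (n : ℤ) : uL s ^ n = uL (n * s) := by
  induction n using Int.induction_on with
  | zero => simp [uL_zero]
  | succ k ih => rw [zpow_add_one, ih, uL_mul]; congr 1; push_cast; ring
  | pred k ih => rw [zpow_sub_one, ih, uL_inv, uL_mul]; congr 1; push_cast; ring

lemma uR_zpow (s : ℂ) (n : ℤ) : uR s ^ n = uR (n * s) := by
  induction n using Int.induction_on with
  | zero => simp [uR_zero]
  | succ k ih => rw [zpow_add_one, ih, uR_mul]; congr 1; push_cast; ring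
  | pred k ih => rw [zpow_sub_one, ih, uR_inv, uR_mul]; congr 1; push_cast; ring

lemma matA_eq : matA = uL 1 := rfl
lemma matB_eq (q : ℂ) : matB q = uR q := rfl

lemma matA_zpow_s6 (n : ℤ) : matA ^ n = uL n := by rw [matA_eq, uL_zpow, mul_one]

lemma matB_zpow_s6 (q : ℂ) (n : ℤ) : matB q ^ n = uR (n * q) := by rw [matB_eq, uR_zpow]

lemma uL_val_01 (s : ℂ) : (uL s).val 0 1 = 0 := rfl
lemma uL_val_10 (s : ℂ) : (uL s).val 1 0 = s := rfl
lemma uR_val_01 (s : ℂ) : (uR s).val 0 1 = s := rfl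

lemma one_val_01 : (1 : SL2).val 0 1 = 0 := by
  simp [Matrix.SpecialLinearGroup.coe_one]

lemma one_val_10 : (1 : SL2).val 1 0 = 0 := by
  simp [Matrix.SpecialLinearGroup.coe_one]

lemma uL_eq_one_iff {s : ℂ} : uL s = 1 ↔ s = 0 := by
  constructor
  · intro h
    have := congrArg (fun g : SL2 => g.val 1 0) h
    simpa [uL_val_10, one_val_10] using this
  · rintro rfl; exact uL_zero

lemma uR_eq_one_iff {s : ℂ} : uR s = 1 ↔ s = 0 := by
  constructor
  · intro h
    have := congrArg (fun g : SL2 => g.val 0 1) h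
    simpa [uR_val_01, one_val_01] using this
  · rintro rfl; exact uR_zero

def sylM (q : ℂ) (s : Bool × ℤ) : SL2 := (if s.1 then matA else matB q) ^ s.2

def evalS (q : ℂ) (S : List (Bool × ℤ)) : SL2 := (S.map (sylM q)).prod

@[simp] lemma evalS_nil (q : ℂ) : evalS q [] = 1 := rfl

@[simp] lemma evalS_cons (q : ℂ) (s : Bool × ℤ) (S : List (Bool × ℤ)) :
    evalS q (s :: S) = sylM q s * evalS q S := by simp [evalS]

lemma evalS_append (q : ℂ) (S T : List (Bool × ℤ)) :
    evalS q (S ++ T) = evalS q S * evalS q T := by simp [evalS]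

lemma lower_mul_uL (g : SL2) (h : g.val 0 1 = 0) (s : ℂ) :
    g * uL s = uL (s * (g.val 1 1) ^ 2) * g := by
  have hd : g.val 0 0 * g.val 1 1 = 1 := by
    have hdet := g.2
    rw [Matrix.det_fin_two, h] at hdet
    linear_combination hdet
  apply Subtype.ext
  rw [Matrix.SpecialLinearGroup.coe_mul, Matrix.SpecialLinearGroup.coe_mul]
  ext i j
  fin_cases i <;> fin_cases j <;>
    simp [uL, Matrix.mul_apply, Fin.sum_univ_two, h] <;>
    linear_combination (-(s * g.val 1 1)) * hd

lemma lower_conj (g : SL2) (h : g.val 0 1 = 0) (s : ℂ) :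
    g * uL s * g⁻¹ = uL (s * (g.val 1 1) ^ 2) := by
  rw [lower_mul_uL g h, mul_assoc, mul_inv_cancel, mul_one]

lemma isStep_of_q_eq_zero {q : ℂ} (h : q = 0) : IsStepRelationNumber 0 q := by
  refine ⟨0, le_refl _, fun _ => 1, fun _ => one_ne_zero, ?_⟩
  have : (List.ofFn fun i : Fin (2 * 0 + 1) =>
      (if (i : ℕ) % 2 = 0 then matB q else matA) ^ ((fun _ => (1:ℤ)) i)) = [matB q ^ (1:ℤ)] := by
    simp [List.ofFn_succ]
  rw [this, zpow_one, List.prod_singleton]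
  simp [h, matB]

def NC (p r : Bool × Bool) : Prop := ¬(p.1 = r.1 ∧ p.2 = !r.2)

def Reduced (L : List (Bool × Bool)) : Prop := List.IsChain NC L

lemma reduce_eq_self {L : List (Bool × Bool)} (h : Reduced L) : FreeGroup.reduce L = L := by
  induction L with
  | nil => rfl
  | cons p t ih =>
    have ht : Reduced t := List.IsChain.tail h
    rw [FreeGroup.reduce.cons, ih ht]
    cases t with
    | nil => rfl
    | cons s r =>
      have hrel : NC p s := (List.isChain_cons_cons.mp h).1
      show (if p.1 = s.1 ∧ p.2 = !s.2 then r else p :: s :: r) = p :: s :: r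
      rw [if_neg hrel]

lemma mk_ne_one {L : List (Bool × Bool)} (h : Reduced L) (hne : L ≠ []) :
    FreeGroup.mk L ≠ 1 := by
  intro heq
  have h2 : (FreeGroup.mk L).toWord = [] := FreeGroup.toWord_eq_nil_iff.mpr heq
  rw [FreeGroup.toWord_mk, reduce_eq_self h] at h2
  exact hne h2

lemma reduced_reduce (L : List (Bool × Bool)) : Reduced (FreeGroup.reduce L) := by
  induction L with
  | nil => exact List.isChain_nil
  | cons p t ih =>
    rw [FreeGroup.reduce.cons]
    rcases hr : FreeGroup.reduce t with _ | ⟨s, r⟩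
    · exact List.isChain_singleton _
    · rw [hr] at ih
      by_cases hc : p.1 = s.1 ∧ p.2 = !s.2
      · simpa [hc, Reduced] using List.IsChain.tail ih
      · simp only [if_neg hc]
        exact List.isChain_cons.mpr ⟨fun y hy => by simp at hy; exact hy ▸ hc, ih⟩

def sgn (b : Bool) : ℤ := cond b 1 (-1)

lemma sgn_ne_zero (b : Bool) : sgn b ≠ 0 := by cases b <;> decide

def evalL (q : ℂ) (L : List (Bool × Bool)) : SL2 := evalS q (L.map fun p => (p.1, sgn p.2))

lemma lift_mk_eq_evalL (q : ℂ) (L : List (Bool × Bool)) :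
    FreeGroup.lift (fun i : Bool => if i then matA else matB q) (FreeGroup.mk L) = evalL q L := by
  rw [FreeGroup.lift_mk]
  unfold evalL evalS
  rw [List.map_map]
  congr 1
  apply List.map_congr_left
  intro p _
  rcases p with ⟨a, b⟩
  cases b <;> cases a <;> simp [sylM, sgn, zpow_one, zpow_neg, Function.comp]

def syllCons (a b : Bool) : List (Bool × ℤ) → List (Bool × ℤ)
  | [] => [(a, sgn b)]
  | (c, n) :: r => if a = c then (c, sgn b + n) :: r else (a, sgn b) :: (c, n) :: r

def syll : List (Bool × Bool) → List (Bool × ℤ)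
  | [] => []
  | (a, b) :: t => syllCons a b (syll t)

lemma syll_spec (q : ℂ) : ∀ L : List (Bool × Bool), Reduced L →
    List.IsChain (fun p r : Bool × ℤ => p.1 ≠ r.1) (syll L) ∧
    (∀ s ∈ syll L, s.2 ≠ 0) ∧
    evalS q (syll L) = evalL q L ∧
    (∀ a b t, L = (a, b) :: t →
      ∃ n r, syll L = (a, n) :: r ∧ (if b = true then 0 < n else n < 0)) := by
  intro L
  induction L with
  | nil =>
    intro _
    refine ⟨List.isChain_nil, by simp [syll], by simp [syll, evalL, evalS], ?_⟩
    intro a b t h; exact absurd h (List.cons_ne_nil _ _).symm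
  | cons p t ih =>
    intro hred
    rcases p with ⟨a, b⟩
    have ht : Reduced t := List.IsChain.tail hred
    obtain ⟨ih1, ih2, ih3, ih4⟩ := ih ht
    have hevL : evalL q ((a, b) :: t) = sylM q (a, sgn b) * evalL q t := by
      simp [evalL]
    rcases hsy : syll t with _ | ⟨⟨c, n⟩, r⟩
    · -- syll t = []
      have hL : syll ((a, b) :: t) = [(a, sgn b)] := by simp [syll, hsy, syllCons]
      have hte : evalL q t = 1 := by rw [← ih3, hsy]; rfl
      refine ⟨?_, ?_, ?_, ?_⟩
      · rw [hL]; exact List.isChain_singleton _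
      · rw [hL]; intro s hs; simp at hs; rw [hs]; exact sgn_ne_zero b
      · rw [hL, hevL, hte]; simp
      · intro a' b' t' he
        injection he with h1 h2
        injection h1 with ha hb
        subst ha; subst hb
        exact ⟨sgn b, [], by rw [hL], by cases b <;> simp [sgn]⟩
    · -- syll t = (c, n) :: r
      have htne : t ≠ [] := by
        intro h; rw [h] at hsy; exact List.cons_ne_nil _ _ hsy.symm
      obtain ⟨⟨a₂, b₂⟩, t₂, rfl⟩ := List.exists_cons_of_ne_nil htne
      obtain ⟨n₂, r₂, hsy₂, hsign₂⟩ := ih4 a₂ b₂ t₂ rfl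
      have hkey : (a₂, n₂) = (c, n) ∧ r₂ = r := by
        have := hsy₂.symm.trans hsy
        exact ⟨by injection this, by injection this⟩
      obtain ⟨hkey1, rfl⟩ := hkey
      injection hkey1 with hca hn
      subst hca; subst hn
      have hnc : NC (a, b) (a₂, b₂) := (List.isChain_cons_cons.mp hred).1
      rw [hsy₂] at ih1 ih2 ih3
      by_cases hac : a = a₂
      · -- merge case
        subst hac
        have hbb : b = b₂ := by
          rcases hb : b <;> rcases hb₂ : b₂ <;> simp_all [NC]
        subst hbb
        have hnn : (if b = true then 0 < sgn b + n₂ else sgn b + n₂ < 0) := by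
          cases b <;> simp [sgn] at hsign₂ ⊢ <;> omega
        have hL : syll ((a, b) :: (a, b) :: t₂) = (a, sgn b + n₂) :: r₂ := by
          rw [show syll ((a, b) :: (a, b) :: t₂) = syllCons a b (syll ((a, b) :: t₂)) from rfl,
            hsy₂]
          simp [syllCons]
        refine ⟨?_, ?_, ?_, ?_⟩
        · rw [hL]
          rcases r₂ with _ | ⟨y, r₃⟩
          · exact List.isChain_singleton _
          · exact List.isChain_cons_cons.mpr ⟨(List.isChain_cons_cons.mp ih1).1, (List.isChain_cons_cons.mp ih1).2⟩
        · rw [hL]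
          intro s hs
          rcases List.mem_cons.mp hs with h | h
          · rw [h]
            intro h0
            have h0' : sgn b + n₂ = 0 := h0
            cases b <;> simp [sgn] at hnn h0' <;> omega
          · exact ih2 s (List.mem_cons_of_mem _ h)
        · rw [hL, hevL, ← ih3]
          rw [evalS_cons, evalS_cons]
          rw [← mul_assoc]
          congr 1
          show sylM q (a, sgn b + n₂) = sylM q (a, sgn b) * sylM q (a, n₂)
          unfold sylM
          simp only []
          rw [← zpow_add]
        · intro a' b' t' he
          injection he with h1 h2
          injection h1 with ha hb
          subst ha; subst hb
          exact ⟨sgn b + n₂, r₂, hL, hnn⟩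
      · -- no merge
        have hL : syll ((a, b) :: (a₂, b₂) :: t₂) = (a, sgn b) :: (a₂, n₂) :: r₂ := by
          rw [show syll ((a, b) :: (a₂, b₂) :: t₂) = syllCons a b (syll ((a₂, b₂) :: t₂)) from rfl,
            hsy₂]
          simp [syllCons, hac]
        refine ⟨?_, ?_, ?_, ?_⟩
        · rw [hL]
          exact List.isChain_cons_cons.mpr ⟨hac, ih1⟩
        · rw [hL]
          intro s hs
          rcases List.mem_cons.mp hs with h | h
          · rw [h]; exact sgn_ne_zero b
          · exact ih2 s h
        · rw [hL, hevL, ← ih3, evalS_cons]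
        · intro a' b' t' he
          injection he with h1 h2
          injection h1 with ha hb
          subst ha; subst hb
          exact ⟨sgn b, (a₂, n₂) :: r₂, hL, by cases b <;> simp [sgn]⟩

lemma bool_ne_iff {x y : Bool} (h : x ≠ y) : x = !y := by
  cases x <;> cases y <;> simp_all

lemma altpos : ∀ (S : List (Bool × ℤ)) (c : Bool),
    List.IsChain (fun p r : Bool × ℤ => p.1 ≠ r.1) S →
    (∀ h : S ≠ [], (S.head h).1 = c) →
    ∀ i (h : i < S.length), (S.get ⟨i, h⟩).1 = if i % 2 = 0 then c else !c := by
  intro S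
  induction S with
  | nil => intro c _ _ i h; simp at h
  | cons p T ih =>
    intro c hch hh i h
    have hp : p.1 = c := hh (List.cons_ne_nil _ _)
    rcases i with _ | i
    · simpa using hp
    · have hT : List.IsChain (fun p r : Bool × ℤ => p.1 ≠ r.1) T := List.IsChain.tail hch
      have hhT : ∀ h : T ≠ [], (T.head h).1 = !c := by
        intro hne
        have := (List.isChain_cons.mp hch).1 (T.head hne) (List.head?_eq_head hne ▸ rfl)
        rw [hp] at this
        exact (bool_ne_iff (Ne.symm this))
      have hi : i < T.length := by simpa using h
      have := ih (!c) hT hhT i hi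
      have hget : ((p :: T).get ⟨i + 1, h⟩) = T.get ⟨i, hi⟩ := rfl
      rw [hget, this]
      rcases Nat.even_or_odd i with he | ho
      · have h1 : i % 2 = 0 := Nat.even_iff.mp he
        have h2 : (i + 1) % 2 ≠ 0 := by omega
        simp [h1, h2]
      · have h1 : i % 2 ≠ 0 := by
          have := Nat.odd_iff.mp ho; omega
        have h2 : (i + 1) % 2 = 0 := by
          have := Nat.odd_iff.mp ho; omega
        simp [h1, h2]

lemma finish_lemma (q : ℂ) (S : List (Bool × ℤ))
    (hch : List.IsChain (fun p r : Bool × ℤ => p.1 ≠ r.1) S)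
    (hnz : ∀ s ∈ S, s.2 ≠ 0)
    (he : evalS q S = 1)
    (hne : S ≠ [])
    (hhead : (S.head hne).1 = false)
    (hlast : (S.getLast hne).1 = true) : ∃ ℓ, IsStepRelationNumber ℓ q := by
  set M := S.dropLast with hM
  have hdec : M ++ [S.getLast hne] = S := List.dropLast_append_getLast hne
  -- positional letters
  have hpos := altpos S false hch (fun _ => hhead)
  -- length parity
  have hSlen : 0 < S.length := List.length_pos_iff.mpr hne
  have hlast' : (S.getLast hne) = S.get ⟨S.length - 1, by omega⟩ := by
    rw [List.getLast_eq_getElem]; rfl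
  have hpar : (S.length - 1) % 2 = 1 := by
    have := hpos (S.length - 1) (by omega)
    rw [← hlast'] at this
    rw [hlast] at this
    by_contra hpp
    have hpp' : (S.length - 1) % 2 = 0 := by omega
    simp [hpp'] at this
  have hMne : M ≠ [] := by
    intro h0
    rw [h0] at hdec
    simp at hdec
    have : S.length = 1 := by rw [← hdec]; rfl
    omega
  have hMlen : M.length = S.length - 1 := List.length_dropLast
  -- k
  obtain ⟨k, hk⟩ : ∃ k, M.length = 2 * k + 1 := by
    refine ⟨(S.length - 2) / 2, ?_⟩
    omega
  -- evalS M has (0,1) entry 0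
  have hsplit : evalS q M * sylM q (S.getLast hne) = 1 := by
    have h1 : evalS q (M ++ [S.getLast hne]) = evalS q M * sylM q (S.getLast hne) := by
      rw [evalS_append, evalS_cons, evalS_nil, mul_one]
    rw [← h1, hdec]
    exact he
  have hsyl : sylM q (S.getLast hne) = uL ((S.getLast hne).2) := by
    unfold sylM
    rw [hlast, if_pos rfl, matA_zpow_s6]
  have hMeval : evalS q M = uL (-(S.getLast hne).2) := by
    rw [hsyl] at hsplit
    rw [mul_eq_one_iff_eq_inv.mp hsplit, uL_inv]
  have hM01 : (evalS q M).val 0 1 = 0 := by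
    rw [hMeval]; exact uL_val_01 _
  have hMS : M.Sublist S := (List.dropLast_prefix S).sublist
  refine ⟨k, k, le_refl k, fun i => (M[(i : ℕ)]'(by omega)).2, ?_, ?_⟩
  · intro i
    exact hnz _ (hMS.mem (List.getElem_mem _))
  · have hlisteq : (List.ofFn (fun i : Fin (2 * k + 1) =>
        (if (i : ℕ) % 2 = 0 then matB q else matA) ^ ((M[(i : ℕ)]'(by omega)).2))) =
        M.map (sylM q) := by
      apply List.ext_getElem
      · simp [hk]
      · intro n h1 h2
        rw [List.getElem_ofFn, List.getElem_map]
        have hn : n < M.length := by simpa using h2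
        have hnS : n < S.length := by omega
        have hletter : (M[n]'hn).1 = if n % 2 = 0 then false else true := by
          have h3 : M[n]'hn = S[n]'hnS := List.getElem_dropLast hn
          have h4 := hpos n hnS
          rw [List.get_eq_getElem] at h4
          rw [h3, h4]
          by_cases hp : n % 2 = 0 <;> simp [hp]
        show (if (n : ℕ) % 2 = 0 then matB q else matA) ^ ((M[n]'hn).2) = sylM q (M[n]'hn)
        unfold sylM
        by_cases hp : n % 2 = 0
        · rw [if_pos hp] at hletter ⊢
          rw [hletter]; simp
        · rw [if_neg hp] at hletter ⊢
          rw [hletter]; simp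
    rw [hlisteq]
    exact hM01

lemma main_lemma (q : ℂ) : ∀ (N : ℕ) (S : List (Bool × ℤ)),
    S.length ≤ N →
    List.IsChain (fun p r : Bool × ℤ => p.1 ≠ r.1) S →
    (∀ s ∈ S, s.2 ≠ 0) → evalS q S = 1 → S ≠ [] →
    ∃ ℓ, IsStepRelationNumber ℓ q := by
  intro N
  induction N with
  | zero =>
    intro S hlen _ _ _ hne
    exact absurd (List.length_eq_zero_iff.mp (Nat.le_zero.mp hlen)) hne
  | succ N ih =>
    intro S hlen hch hnz he hne
    rcases S with _ | ⟨⟨a, n⟩, T⟩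
    · exact absurd rfl hne
    rcases hT : T with _ | ⟨t0, T'⟩
    · -- singleton case
      subst hT
      have h1 : sylM q (a, n) = 1 := by simpa using he
      have hn0 : n ≠ 0 := by simpa using hnz (a, n) (by simp)
      cases a
      · have h2 : uR ((n : ℂ) * q) = 1 := by
          rw [← matB_zpow_s6]; simpa [sylM] using h1
        have hq : (n : ℂ) * q = 0 := uR_eq_one_iff.mp h2
        have hq0 : q = 0 := by
          rcases mul_eq_zero.mp hq with h | h
          · exact absurd (by exact_mod_cast h) hn0
          · exact h
        exact ⟨0, isStep_of_q_eq_zero hq0⟩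
      · have h2 : uL ((n : ℂ)) = 1 := by
          rw [← matA_zpow_s6]; simpa [sylM] using h1
        have : (n : ℂ) = 0 := uL_eq_one_iff.mp h2
        exact absurd (by exact_mod_cast this) hn0
    · subst hT
      have hTne : (t0 :: T') ≠ [] := List.cons_ne_nil _ _
      set T : List (Bool × ℤ) := t0 :: T' with hTdef
      set l : Bool × ℤ := T.getLast hTne with hl
      have hchT : List.IsChain (fun p r : Bool × ℤ => p.1 ≠ r.1) T := List.IsChain.tail hch
      have hSlast : ((a, n) :: T).getLast (List.cons_ne_nil _ _) = l := List.getLast_cons hTne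
      have heT : sylM q (a, n) * evalS q T = 1 := by
        rw [← evalS_cons]; exact he
      by_cases hal : a = l.1
      · -- first letter = last letter : merge
        set M := T.dropLast with hMdef
        have hTdec : M ++ [l] = T := List.dropLast_append_getLast hTne
        have hchT' : List.IsChain (fun p r : Bool × ℤ => p.1 ≠ r.1) (M ++ [l]) := by
          rw [hTdec]; exact hchT
        obtain ⟨hchM, -, hjunc⟩ := List.isChain_append.mp hchT'
        have hMne : M ≠ [] := by
          intro h0
          rw [h0] at hTdec
          simp at hTdec
          have : List.IsChain (fun p r : Bool × ℤ => p.1 ≠ r.1) ((a, n) :: [l]) := by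
            rw [← hTdec] at hch; exact hch
          have h3 : a ≠ l.1 := (List.isChain_cons_cons.mp this).1
          exact h3 hal
        have hjunc' : (M.getLast hMne).1 ≠ l.1 := by
          apply hjunc
          · rw [List.getLast?_eq_getLast hMne]; rfl
          · rfl
        have hTeval : evalS q T = evalS q M * sylM q l := by
          rw [← hTdec, evalS_append, evalS_cons, evalS_nil, mul_one]
        -- sylM in terms of a
        have hsyll : sylM q l = (if a then matA else matB q) ^ l.2 := by
          unfold sylM; rw [← hal]
        have hsyln : sylM q (a, n) = (if a then matA else matB q) ^ n := rfl
        have h0 : (if a then matA else matB q) ^ n * (evalS q M * (if a then matA else matB q) ^ l.2) = 1 := by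
          rw [← hsyll, ← hTeval, ← hsyln]; exact heT
        have hinv : ((if a then matA else matB q) ^ n)⁻¹
            = evalS q M * (if a then matA else matB q) ^ l.2 :=
          inv_eq_of_mul_eq_one_right h0
        have hkey : evalS q M * (if a then matA else matB q) ^ (l.2 + n) = 1 := by
          rw [zpow_add, ← mul_assoc, ← hinv, inv_mul_cancel]
        have hlenT : T.length ≤ N := by
          have := hlen; simp at this; omega
        have hlenM : M.length = T.length - 1 := List.length_dropLast
        have hmemM : ∀ s ∈ M, s ∈ ((a, n) :: T) := by
          intro s hs
          exact List.mem_cons_of_mem _ ((List.dropLast_prefix T).sublist.mem hs)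
        by_cases hz : l.2 + n = 0
        · -- middle collapses to identity
          have hM1 : evalS q M = 1 := by
            rw [hz] at hkey; simpa using hkey
          exact ih M (by omega) hchM (fun s hs => hnz s (hmemM s hs)) hM1 hMne
        · -- recurse on M ++ [(a, l.2 + n)]
          apply ih (M ++ [(a, l.2 + n)])
          · have hTpos : 0 < T.length := List.length_pos_iff.mpr hTne
            have hlen' : (M ++ [(a, l.2 + n)]).length = M.length + 1 := by simp
            omega
          · apply List.isChain_append.mpr
            refine ⟨hchM, List.isChain_singleton _, ?_⟩
            intro x hx y hy
            rw [List.getLast?_eq_getLast hMne] at hx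
            have hx' : M.getLast hMne = x := by simpa using hx
            have hy' : (a, l.2 + n) = y := by simpa using hy
            rw [← hx', ← hy', hal]
            exact hjunc'
          · intro s hs
            rcases List.mem_append.mp hs with h | h
            · exact hnz s (hmemM s h)
            · have : s = (a, l.2 + n) := by simpa using h
              rw [this]; exact hz
          · rw [evalS_append]
            rw [show evalS q [(a, l.2 + n)] = sylM q (a, l.2 + n) from by
              simp only [evalS_cons, evalS_nil, mul_one]]
            exact hkey
          · simp
      · -- first letter ≠ last letter
        have hlastT : l.1 ≠ a := fun h => hal h.symm
        cases ha : a
        · -- starts with false: finish directly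
          apply finish_lemma q ((a, n) :: T) hch hnz he (List.cons_ne_nil _ _)
          · subst ha; rfl
          · rw [hSlast]
            subst ha
            simpa using bool_ne_iff hlastT
        · -- starts with true: rotate
          have hl1 : l.1 = false := by
            subst ha
            cases hll : l.1
            · rfl
            · exact absurd (hll ▸ rfl) (hll ▸ hlastT)
          have heT' : evalS q (T ++ [(a, n)]) = 1 := by
            rw [evalS_append]
            rw [show evalS q [(a, n)] = sylM q (a, n) from by
              simp only [evalS_cons, evalS_nil, mul_one]]
            have := inv_eq_of_mul_eq_one_right heT
            rw [← this, inv_mul_cancel]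
          apply finish_lemma q (T ++ [(a, n)]) ?_ ?_ heT' ?_ ?_ ?_
          · apply List.isChain_append.mpr
            refine ⟨hchT, List.isChain_singleton _, ?_⟩
            intro x hx y hy
            rw [List.getLast?_eq_getLast hTne] at hx
            have hx' : l = x := by simpa using hx
            have hy' : (a, n) = y := by simpa using hy
            rw [← hx', ← hy', ha, hl1]
            simp
          · intro s hs
            rcases List.mem_append.mp hs with h | h
            · exact hnz s (List.mem_cons_of_mem _ h)
            · have : s = (a, n) := by simpa using h
              rw [this]
              exact hnz (a, n) (by simp)
          · simp
          · -- head letter false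
            show ((t0 :: (T' ++ [(a, n)])).head _).1 = false
            have ht0 : t0.1 = false := by
              have h4 : a ≠ t0.1 := (List.isChain_cons_cons.mp hch).1
              subst ha
              cases htt : t0.1
              · rfl
              · exact absurd (htt ▸ rfl) (htt ▸ h4)
            simpa using ht0
          · subst ha
            simp [List.getLast_append]

lemma forward_dir (q : ℂ) (h : IsRelationNumber q) : ∃ ℓ : ℕ, IsStepRelationNumber ℓ q := by
  unfold IsRelationNumber at h
  rw [injective_iff_map_eq_one] at h
  push_neg at h
  obtain ⟨w, hw1, hw2⟩ := h
  have hred : Reduced w.toWord := by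
    have h0 : Reduced (FreeGroup.reduce w.toWord) := reduced_reduce w.toWord
    rwa [FreeGroup.reduce_toWord] at h0
  have hLne : w.toWord ≠ [] := fun h0 => hw2 (FreeGroup.toWord_eq_nil_iff.mp h0)
  have hev : evalL q w.toWord = 1 := by
    rw [← lift_mk_eq_evalL, FreeGroup.mk_toWord]
    exact hw1
  obtain ⟨h1, h2, h3, h4⟩ := syll_spec q w.toWord hred
  have hSne : syll w.toWord ≠ [] := by
    rcases hc : w.toWord with _ | ⟨⟨a, b⟩, t⟩
    · exact absurd hc hLne
    · obtain ⟨n, r, hr, -⟩ := h4 a b t hc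
      rw [← hc, hr]
      exact List.cons_ne_nil _ _
  exact main_lemma q (syll w.toWord).length (syll w.toWord) le_rfl h1 h2
    (by rw [h3]; exact hev) hSne

def zword (a : Bool) (n : ℤ) : List (Bool × Bool) := List.replicate n.natAbs (a, decide (0 < n))

lemma zword_ne_nil {a : Bool} {n : ℤ} (h : n ≠ 0) : zword a n ≠ [] := by
  simp [zword, List.replicate_eq_nil_iff]
  omega

lemma zword_mem {a : Bool} {n : ℤ} {x : Bool × Bool} (h : x ∈ zword a n) : x.1 = a := by
  rw [(List.mem_replicate.mp h).2]

lemma zword_reduced (a : Bool) (n : ℤ) : Reduced (zword a n) := by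
  apply List.isChain_replicate_of_rel
  intro hcon
  simp [NC] at hcon

lemma mk_replicate_true (a : Bool) : ∀ k : ℕ,
    FreeGroup.mk (List.replicate k (a, true)) = FreeGroup.of a ^ k := by
  intro k
  induction k with
  | zero => rw [pow_zero, List.replicate_zero, FreeGroup.one_eq_mk]
  | succ k ih =>
    rw [List.replicate_succ, ← List.singleton_append, ← FreeGroup.mul_mk, ih, pow_succ']
    rfl

lemma mk_singleton_false (a : Bool) : FreeGroup.mk [(a, false)] = (FreeGroup.of a)⁻¹ := by
  rw [show FreeGroup.of a = FreeGroup.mk [(a, true)] from rfl, FreeGroup.inv_mk]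
  rfl

lemma mk_replicate_false (a : Bool) : ∀ k : ℕ,
    FreeGroup.mk (List.replicate k (a, false)) = (FreeGroup.of a)⁻¹ ^ k := by
  intro k
  induction k with
  | zero => rw [pow_zero, List.replicate_zero, FreeGroup.one_eq_mk]
  | succ k ih =>
    rw [List.replicate_succ, ← List.singleton_append, ← FreeGroup.mul_mk, ih, pow_succ',
      mk_singleton_false]

lemma mk_zword (a : Bool) (n : ℤ) : FreeGroup.mk (zword a n) = FreeGroup.of a ^ n := by
  rcases n with k | k
  · rw [Int.ofNat_eq_natCast, zpow_natCast]
    rcases k with _ | k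
    · rw [show zword a ((0 : ℕ) : ℤ) = [] from rfl, ← FreeGroup.one_eq_mk, pow_zero]
    · have hpos : (0 : ℤ) < ((k + 1 : ℕ) : ℤ) := by exact_mod_cast Nat.succ_pos k
      have h1 : zword a ((k + 1 : ℕ) : ℤ) = List.replicate (k + 1) (a, true) := by
        unfold zword
        rw [Int.natAbs_natCast, decide_eq_true hpos]
      rw [h1, mk_replicate_true]
  · have h1 : zword a (Int.negSucc k) = List.replicate (k + 1) (a, false) := by
      have hneg : ¬(0 : ℤ) < Int.negSucc k := by
        have := Int.negSucc_lt_zero k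
        omega
      unfold zword
      rw [Int.natAbs_negSucc, decide_eq_false hneg]
    rw [h1, mk_replicate_false, inv_pow, ← zpow_negSucc]

def wordOf (S : List (Bool × ℤ)) : List (Bool × Bool) := (S.map fun s => zword s.1 s.2).flatten

lemma mk_wordOf : ∀ S : List (Bool × ℤ),
    FreeGroup.mk (wordOf S) = (S.map fun s => FreeGroup.of s.1 ^ s.2).prod := by
  intro S
  induction S with
  | nil => rw [show wordOf [] = [] from rfl, ← FreeGroup.one_eq_mk, List.map_nil, List.prod_nil]
  | cons s S ih =>
    rw [show wordOf (s :: S) = zword s.1 s.2 ++ wordOf S from by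
        simp [wordOf], ← FreeGroup.mul_mk, ih, mk_zword, List.map_cons, List.prod_cons]

lemma reduced_glue {L M : List (Bool × Bool)} (hL : Reduced L) (hM : Reduced M)
    (hj : ∀ x ∈ L.getLast?, ∀ y ∈ M.head?, x.1 ≠ y.1) : Reduced (L ++ M) :=
  List.isChain_append.mpr ⟨hL, hM, fun x hx y hy hcon => hj x hx y hy hcon.1⟩

lemma reduced_cons {p : Bool × Bool} {M : List (Bool × Bool)} (hM : Reduced M)
    (hj : ∀ y ∈ M.head?, p.1 ≠ y.1) : Reduced (p :: M) :=
  List.isChain_cons.mpr ⟨fun y hy hcon => hj y hy hcon.1, hM⟩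

lemma wordOf_spec : ∀ S : List (Bool × ℤ),
    List.IsChain (fun p r : Bool × ℤ => p.1 ≠ r.1) S →
    (∀ s ∈ S, s.2 ≠ 0) → S ≠ [] →
    Reduced (wordOf S) ∧ wordOf S ≠ [] ∧
    (∀ x ∈ (wordOf S).head?, ∀ y ∈ S.head?, x.1 = y.1) ∧
    (∀ x ∈ (wordOf S).getLast?, ∀ y ∈ S.getLast?, x.1 = y.1) := by
  intro S
  induction S with
  | nil => intro _ _ h; exact absurd rfl h
  | cons s T ih =>
    intro hch hnz _
    have hwcons : wordOf (s :: T) = zword s.1 s.2 ++ wordOf T := by simp [wordOf]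
    have hzne : zword s.1 s.2 ≠ [] := zword_ne_nil (hnz s (by simp))
    rcases hT : T with _ | ⟨s₂, T'⟩
    · subst hT
      have hw : wordOf [s] = zword s.1 s.2 := by simp [wordOf]
      refine ⟨?_, ?_, ?_, ?_⟩
      · rw [hw]; exact zword_reduced _ _
      · rw [hw]; exact hzne
      · rw [hw]
        intro x hx y hy
        have hy' : s = y := by simpa using hy
        rw [zword_mem (List.mem_of_mem_head? hx), ← hy']
      · rw [hw]
        intro x hx y hy
        have hy' : s = y := by simpa using hy
        rw [zword_mem (List.mem_of_mem_getLast? hx), ← hy']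
    · subst hT
      have hTne : s₂ :: T' ≠ [] := List.cons_ne_nil _ _
      obtain ⟨ihred, ihne, ihhead, ihlast⟩ := ih (List.IsChain.tail hch)
        (fun t ht => hnz t (List.mem_cons_of_mem _ ht)) hTne
      have hs₂ : s.1 ≠ s₂.1 := (List.isChain_cons_cons.mp hch).1
      refine ⟨?_, ?_, ?_, ?_⟩
      · rw [hwcons]
        apply reduced_glue (zword_reduced _ _) ihred
        intro x hx y hy
        rw [zword_mem (List.mem_of_mem_getLast? hx)]
        rw [ihhead y hy s₂ (by rw [List.head?_cons]; rfl)]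
        exact hs₂
      · rw [hwcons]
        intro hcon
        exact hzne (List.append_eq_nil_iff.mp hcon).1
      · rw [hwcons]
        intro x hx y hy
        rw [List.head?_append_of_ne_nil _ hzne] at hx
        have hy' : s = y := by simpa using hy
        rw [zword_mem (List.mem_of_mem_head? hx), ← hy']
      · rw [hwcons]
        intro x hx y hy
        rw [List.getLast?_append_of_ne_nil _ ihne] at hx
        have hy2 : (s₂ :: T').getLast hTne ∈ (s₂ :: T').getLast? :=
          by rw [List.getLast?_eq_getLast hTne]; rfl
        have h3 := ihlast x hx _ hy2
        have hy' : (s :: s₂ :: T').getLast (List.cons_ne_nil _ _) = y := by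
          rw [List.getLast?_eq_getLast (List.cons_ne_nil _ _)] at hy
          simpa using hy
        rw [h3, ← hy', List.getLast_cons hTne]

lemma reduced_invRev {L : List (Bool × Bool)} (h : Reduced L) : Reduced (FreeGroup.invRev L) := by
  unfold Reduced at h ⊢
  rw [FreeGroup.invRev, List.isChain_reverse, List.isChain_map]
  apply List.IsChain.imp ?_ h
  rintro ⟨a1, a2⟩ ⟨b1, b2⟩ hnc
  rintro ⟨h1, h2⟩
  apply hnc
  refine ⟨h1.symm, ?_⟩
  revert h2
  cases a2 <;> cases b2 <;> simp

lemma invRev_head_letter {L : List (Bool × Bool)} :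
    ∀ x ∈ (FreeGroup.invRev L).head?, ∀ y ∈ L.getLast?, x.1 = y.1 := by
  intro x hx y hy
  rw [FreeGroup.invRev, List.head?_reverse, List.getLast?_map] at hx
  rw [hy] at hx
  have hxy : (y.1, !y.2) = x := by simpa using hx
  rw [← hxy]

lemma invRev_last_letter {L : List (Bool × Bool)} :
    ∀ x ∈ (FreeGroup.invRev L).getLast?, ∀ y ∈ L.head?, x.1 = y.1 := by
  intro x hx y hy
  rw [FreeGroup.invRev, List.getLast?_reverse, List.head?_map] at hx
  rw [hy] at hx
  have hxy : (y.1, !y.2) = x := by simpa using hx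
  rw [← hxy]

lemma invRev_ne_nil {L : List (Bool × Bool)} (h : L ≠ []) : FreeGroup.invRev L ≠ [] := by
  intro h0
  apply h
  have := FreeGroup.invRev_length (L₁ := L)
  rw [h0] at this
  exact List.length_eq_zero_iff.mp this.symm

lemma backward_dir (q : ℂ) (ℓ : ℕ) (h : IsStepRelationNumber ℓ q) : IsRelationNumber q := by
  obtain ⟨k, -, m, hm, hP⟩ := h
  set f : Fin (2 * k + 1) → Bool × ℤ := fun i => (decide ((i : ℕ) % 2 = 1), m i) with hf
  set S : List (Bool × ℤ) := List.ofFn f with hS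
  have hSlen : S.length = 2 * k + 1 := List.length_ofFn
  have hSne : S ≠ [] := by
    intro h0; rw [h0] at hSlen; simp at hSlen
  have hch : List.IsChain (fun p r : Bool × ℤ => p.1 ≠ r.1) S := by
    show List.IsChain (fun p r : Bool × ℤ => p.1 ≠ r.1) (List.ofFn f)
    rw [List.isChain_iff_getElem]
    intro i hi
    rw [List.getElem_ofFn, List.getElem_ofFn]
    simp only [hf, Fin.coe_cast]
    intro hcon
    have h1 : ((i : ℕ) % 2 = 1) ↔ (((i + 1 : ℕ)) % 2 = 1) := decide_eq_decide.mp hcon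
    omega
  have hnz : ∀ s ∈ S, s.2 ≠ 0 := by
    intro s hs
    rw [hS, List.mem_ofFn] at hs
    obtain ⟨i, rfl⟩ := hs
    exact hm i
  have hev : evalS q S = (List.ofFn (fun i : Fin (2 * k + 1) =>
      (if (i : ℕ) % 2 = 0 then matB q else matA) ^ m i)).prod := by
    unfold evalS
    have hmain : sylM q ∘ f = fun i : Fin (2 * k + 1) =>
        (if (i : ℕ) % 2 = 0 then matB q else matA) ^ m i := by
      funext i
      show sylM q (f i) = _
      simp only [hf, sylM]
      rcases Nat.even_or_odd (i : ℕ) with he | ho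
      · have h0 : (i : ℕ) % 2 = 0 := Nat.even_iff.mp he
        simp [h0]
      · have h0 : (i : ℕ) % 2 = 1 := Nat.odd_iff.mp ho
        simp [h0]
    show (List.map (sylM q) (List.ofFn f)).prod = _
    rw [List.map_ofFn, hmain]
  have hP' : (evalS q S).val 0 1 = 0 := by rw [hev]; exact hP
  set F := (FreeGroup.lift (fun i : Bool => if i then matA else matB q) :
      FreeGroup Bool →* Matrix.SpecialLinearGroup (Fin 2) ℂ) with hF
  set A : List (Bool × Bool) := wordOf S with hA
  set p : FreeGroup Bool := FreeGroup.mk A with hp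
  have hliftp : F p = evalS q S := by
    rw [hp, hA, mk_wordOf, map_list_prod, List.map_map]
    unfold evalS
    congr 1
    apply List.map_congr_left
    intro s _
    show F (FreeGroup.of s.1 ^ s.2) = sylM q s
    rw [map_zpow, FreeGroup.lift_apply_of]
    rfl
  obtain ⟨hAred, hAne, hAhead, hAlast⟩ := wordOf_spec S hch hnz hSne
  have hheadS : ∀ y ∈ S.head?, y.1 = false := by
    intro y hy
    rw [hS, List.ofFn_succ] at hy
    have h0 : f 0 = y := by simpa using hy
    rw [← h0]
    simp [hf]
  have hhead' : ∀ h : S ≠ [], (S.head h).1 = false := by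
    intro h
    apply hheadS
    rw [List.head?_eq_head h]
    rfl
  have hlastS : ∀ y ∈ S.getLast?, y.1 = false := by
    intro y hy
    rw [List.getLast?_eq_getLast hSne] at hy
    have hy' : S.getLast hSne = y := by simpa using hy
    have hpos := altpos S false hch hhead'
    have h2 : S.getLast hSne = S.get ⟨S.length - 1, by omega⟩ := by
      rw [List.getLast_eq_getElem]
      rfl
    have h3 : (S.length - 1) % 2 = 0 := by rw [hSlen]; omega
    rw [← hy', h2, hpos (S.length - 1) (by omega), h3]
    rfl
  have hWAhead : ∀ x ∈ A.head?, x.1 = false := by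
    intro x hx
    have hh : S.head hSne ∈ S.head? := by rw [List.head?_eq_head hSne]; rfl
    rw [hAhead x hx _ hh]
    exact hheadS _ hh
  have hWAlast : ∀ x ∈ A.getLast?, x.1 = false := by
    intro x hx
    have hh : S.getLast hSne ∈ S.getLast? := by rw [List.getLast?_eq_getLast hSne]; rfl
    rw [hAlast x hx _ hh]
    exact hlastS _ hh
  set IA : List (Bool × Bool) := FreeGroup.invRev A with hIA
  have hIAred : Reduced IA := reduced_invRev hAred
  have hIAne : IA ≠ [] := invRev_ne_nil hAne
  have hIAhead : ∀ x ∈ IA.head?, x.1 = false := by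
    intro x hx
    have hh : A.getLast hAne ∈ A.getLast? := by rw [List.getLast?_eq_getLast hAne]; rfl
    rw [invRev_head_letter x hx _ hh]
    exact hWAlast _ hh
  have hIAlast : ∀ x ∈ IA.getLast?, x.1 = false := by
    intro x hx
    have hh : A.head hAne ∈ A.head? := by rw [List.head?_eq_head hAne]; rfl
    rw [invRev_last_letter x hx _ hh]
    exact hWAhead _ hh
  -- build the word
  set Y1 : List (Bool × Bool) := IA ++ [(true, true)] with hY1
  set Y2 : List (Bool × Bool) := (true, false) :: Y1 with hY2
  set Y3 : List (Bool × Bool) := A ++ Y2 with hY3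
  set Y4 : List (Bool × Bool) := (true, false) :: Y3 with hY4
  set Y5 : List (Bool × Bool) := IA ++ Y4 with hY5
  set Y6 : List (Bool × Bool) := (true, true) :: Y5 with hY6
  set W : List (Bool × Bool) := A ++ Y6 with hW
  have hY1red : Reduced Y1 := by
    apply reduced_glue hIAred (List.isChain_singleton _)
    intro x hx y hy
    have hy' : (true, true) = y := by simpa using hy
    rw [hIAlast x hx, ← hy']
    simp
  have hY1head : Y1.head? = IA.head? := List.head?_append_of_ne_nil _ hIAne
  have hY2red : Reduced Y2 := by
    apply reduced_cons hY1red
    intro y hy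
    rw [hY1head] at hy
    rw [hIAhead y hy]
    simp
  have hY3red : Reduced Y3 := by
    apply reduced_glue hAred hY2red
    intro x hx y hy
    rw [hY2] at hy
    have hy' : (true, false) = y := by simpa using hy
    rw [hWAlast x hx, ← hy']
    simp
  have hY3head : Y3.head? = A.head? := List.head?_append_of_ne_nil _ hAne
  have hY4red : Reduced Y4 := by
    apply reduced_cons hY3red
    intro y hy
    rw [hY3head] at hy
    rw [hWAhead y hy]
    simp
  have hY5red : Reduced Y5 := by
    apply reduced_glue hIAred hY4red
    intro x hx y hy
    rw [hY4] at hy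
    have hy' : (true, false) = y := by simpa using hy
    rw [hIAlast x hx, ← hy']
    simp
  have hY5head : Y5.head? = IA.head? := List.head?_append_of_ne_nil _ hIAne
  have hY6red : Reduced Y6 := by
    apply reduced_cons hY5red
    intro y hy
    rw [hY5head] at hy
    rw [hIAhead y hy]
    simp
  have hWred : Reduced W := by
    apply reduced_glue hAred hY6red
    intro x hx y hy
    rw [hY6] at hy
    have hy' : (true, true) = y := by simpa using hy
    rw [hWAlast x hx, ← hy']
    simp
  have hWne : W ≠ [] := by
    rw [hW]
    intro h0
    exact hAne (List.append_eq_nil_iff.mp h0).1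
  -- the group element
  set x : FreeGroup Bool := FreeGroup.of true with hx
  have hmkIA : FreeGroup.mk IA = p⁻¹ := by rw [hIA, ← FreeGroup.inv_mk, ← hp]
  have hxmk : FreeGroup.mk [(true, true)] = x := rfl
  have hxmk' : FreeGroup.mk [(true, false)] = x⁻¹ := mk_singleton_false true
  have m1 : FreeGroup.mk Y1 = p⁻¹ * x := by
    rw [hY1, ← FreeGroup.mul_mk, hmkIA, hxmk]
  have m2 : FreeGroup.mk Y2 = x⁻¹ * (p⁻¹ * x) := by
    rw [hY2, ← List.singleton_append, ← FreeGroup.mul_mk, hxmk', m1]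
  have m3 : FreeGroup.mk Y3 = p * (x⁻¹ * (p⁻¹ * x)) := by
    rw [hY3, ← FreeGroup.mul_mk, ← hp, m2]
  have m4 : FreeGroup.mk Y4 = x⁻¹ * (p * (x⁻¹ * (p⁻¹ * x))) := by
    rw [hY4, ← List.singleton_append, ← FreeGroup.mul_mk, hxmk', m3]
  have m5 : FreeGroup.mk Y5 = p⁻¹ * (x⁻¹ * (p * (x⁻¹ * (p⁻¹ * x)))) := by
    rw [hY5, ← FreeGroup.mul_mk, hmkIA, m4]
  have m6 : FreeGroup.mk Y6 = x * (p⁻¹ * (x⁻¹ * (p * (x⁻¹ * (p⁻¹ * x))))) := by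
    rw [hY6, ← List.singleton_append, ← FreeGroup.mul_mk, hxmk, m5]
  have hmkW : FreeGroup.mk W = p * (x * (p⁻¹ * (x⁻¹ * (p * (x⁻¹ * (p⁻¹ * x)))))) := by
    rw [hW, ← FreeGroup.mul_mk, ← hp, m6]
  have hFx : F x = matA := by
    rw [hx, hF, FreeGroup.lift_apply_of]
    rfl
  have hFW : F (FreeGroup.mk W) = 1 := by
    rw [hmkW]
    simp only [map_mul, map_inv]
    rw [hliftp, hFx]
    set P := evalS q S with hPdef
    have e1 : P * matA * P⁻¹ = uL (P.val 1 1 ^ 2) := by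
      rw [matA_eq]
      rw [lower_conj P hP' 1, one_mul]
    have e2 : P * matA⁻¹ * P⁻¹ = uL (-(P.val 1 1 ^ 2)) := by
      rw [matA_eq, uL_inv, lower_conj P hP' (-1)]
      congr 1
      ring
    have hre : P * (matA * (P⁻¹ * (matA⁻¹ * (P * (matA⁻¹ * (P⁻¹ * matA))))))
        = (P * matA * P⁻¹) * matA⁻¹ * (P * matA⁻¹ * P⁻¹) * matA := by
      group
    rw [hre, e1, e2, matA_eq, uL_inv, uL_mul, uL_mul, uL_mul]
    rw [show (P.val 1 1 ^ 2 + -1 + -P.val 1 1 ^ 2 + 1 : ℂ) = 0 from by ring]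
    exact uL_zero
  intro hinj
  apply mk_ne_one hWred hWne
  apply hinj
  rw [hFW, map_one]


theorem stmt6 (q : ℂ) :
    IsRelationNumber q ↔ ∃ ℓ : ℕ, IsStepRelationNumber ℓ q := by
  constructor
  · exact forward_dir q
  · rintro ⟨ℓ, h⟩
    exact backward_dir q ℓ h
end
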